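/- The logarithmic potential of the uniform probability measure on the unit circle in the complex plane equals log⁺|z|, i.e., U_μ(z) = log|z| for |z| ≥ 1 and U_μ(z) = 0 for |z| ≤ 1. -/

import Mathlib

open MeasureTheory Real

/-- The uniform probability measure on the unit circle in `ℂ`. -/
noncomputable def mT : Measure ℂ :=
  (ENNReal.ofReal (2 * π))⁻¹ •
    Measure.map (fun θ : ℝ => Complex.exp (θ * Complex.I))
      (volume.restrict (Set.Ioc 0 (2 * π)))

/-- The logarithmic potential of a measure on `ℂ`. -/
noncomputable def logPot (μ : Measure ℂ) (z : ℂ) : ℝ :=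
  ∫ w, Real.log ‖z - w‖ ∂μ

theorem integral_mT_eq_circleAverage {E : Type*} [NormedAddCommGroup E] [NormedSpace ℝ E]
    {f : ℂ → E} (hf : StronglyMeasurable f) :
    ∫ w, f w ∂mT = circleAverage f 0 1 := by
  have hexp : Measurable fun θ : ℝ => Complex.exp (θ * Complex.I) := by fun_prop
  rw [mT, integral_smul_measure, integral_map hexp.aemeasurable hf.aestronglyMeasurable,
    ENNReal.toReal_inv, ENNReal.toReal_ofReal two_pi_pos.le,
    ← intervalIntegral.integral_of_le two_pi_pos.le, circleAverage_def]
  simp only [circleMap_zero, Complex.ofReal_one, one_mul]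

theorem logPot_mT_eq_posLog (z : ℂ) : logPot mT z = log⁺ ‖z‖ := by
  have hmeas : StronglyMeasurable fun w : ℂ => Real.log ‖z - w‖ := by fun_prop
  rw [logPot, integral_mT_eq_circleAverage hmeas]
  simp only [norm_sub_rev z, circleAverage_log_norm_sub_const_eq_posLog]

/-- The logarithmic potential of the uniform probability measure on the unit circle
equals `log⁺ |z|`. -/
theorem logPot_mT (z : ℂ) :
    (1 ≤ ‖z‖ → logPot mT z = Real.log ‖z‖) ∧
    (‖z‖ ≤ 1 → logPot mT z = 0) := by
  rw [logPot_mT_eq_posLog]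
  refine ⟨fun hz => posLog_eq_log ?_, fun hz => (posLog_eq_zero_iff _).2 ?_⟩ <;>
    rwa [abs_norm]
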